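/- arXiv:2212.08928 — 3 statements merged into one kernel-verified Lean document; each statement's English description precedes it below -/
import Mathlib

section
/- Let G be a group with a finitely generated abelian normal subgroup G₁ such that G/G₁ is finite. Let h₁,…,h_m generate G₁ and let g₁,…,g_k ∈ G represent every conjugacy class of G/G₁. Let ρ₁, ρ₂ be finite-dimensional complex representations of G. If for every finite sequence of elements from K = {g₁,…,g_k, h₁,…,h_m, h₁⁻¹,…,h_m⁻¹} the summed-by-signature traces of the images under ρ₁ and ρ₂ agree (equivalently, the divisors of det(Σ xᵢ ρⱼ(kᵢ) − I) coincide for j=1,2), then the characters χ_{ρ₁} and χ_{ρ₂} are equal on all of G. -/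
/-!
Every `x : G` is conjugate to `g j * b` for some representative `g j` and some `b ∈ G₁`, and `b` is
a word `l` in the letters `h i, (h i)⁻¹`. These letters commute, so the product of any ordering of
`g j :: l` is conjugate, by a cyclic rotation, to `g j * b`. Hence the permutation-summed trace of
`g j :: l` is `(length l + 1)! • χ(x)`, and the hypothesis determines `χ(x)`.
-/

open Matrix

theorem QuotientGroup.exists_mem_isConj_mul_of_isConj_mk {G : Type*} [Group G]
    {N : Subgroup G} [N.Normal] {a x : G} (h : IsConj (a : G ⧸ N) x) :
    ∃ b ∈ N, IsConj (a * b) x := by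
  obtain ⟨c, hc⟩ := isConj_iff.mp h
  obtain ⟨y, rfl⟩ := QuotientGroup.mk_surjective c
  have hmem : (y * a * y⁻¹)⁻¹ * x ∈ N := QuotientGroup.eq.mp (by simpa using hc)
  refine ⟨a⁻¹ * y⁻¹ * x * y, ?_, isConj_iff.mpr ⟨y, by group⟩⟩
  simpa [mul_assoc] using Subgroup.Normal.conj_mem ‹_› _ hmem y⁻¹

theorem Subgroup.exists_list_of_mem_closure {G : Type*} [Group G] {S : Set G} {x : G}
    (hx : x ∈ closure S) : ∃ l : List G, (∀ y ∈ l, y ∈ S ∪ S⁻¹) ∧ l.prod = x := by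
  rw [← mem_toSubmonoid, closure_toSubmonoid] at hx
  exact Submonoid.exists_list_of_mem_closure hx

theorem List.isConj_prod_of_perm_cons {G : Type*} [Group G] {a : G} {l l' : List G}
    (hl : l.Pairwise Commute) (hperm : l'.Perm (a :: l)) : IsConj l'.prod (a * l.prod) := by
  obtain ⟨A, B, rfl⟩ := List.append_of_mem (hperm.symm.subset (List.mem_cons_self ..))
  have hBA : (B ++ A).Perm l :=
    List.perm_append_comm.trans ((List.perm_cons a).mp (List.perm_middle.symm.trans hperm))
  have hprod : (B ++ A).prod = l.prod :=
    hBA.prod_eq' ((hBA.pairwise_iff Commute.symm).mpr hl)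
  refine isConj_iff.mpr ⟨A.prod⁻¹, ?_⟩
  rw [← hprod, List.prod_append, List.prod_cons, List.prod_append]
  group

section Representation

variable {G n R : Type*} [Group G] [Fintype n] [DecidableEq n] [CommSemiring R]

theorem IsConj.trace_map_eq (ρ : G →* GL n R) {x y : G} (hxy : IsConj x y) :
    trace (ρ x : Matrix n n R) = trace (ρ y : Matrix n n R) := by
  obtain ⟨c, rfl⟩ := isConj_iff.mp hxy
  simp only [map_mul, map_inv, Units.val_mul, trace_units_conj]

theorem sum_permutations_trace_map_prod_cons (ρ : G →* GL n R) (a : G) {l : List G}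
    (hl : l.Pairwise Commute) :
    ((a :: l).permutations.map fun l' =>
        trace ((l'.map fun x => (ρ x : Matrix n n R)).prod)).sum =
      (l.length + 1).factorial • trace (ρ (a * l.prod) : Matrix n n R) := by
  have hconst : ∀ l' ∈ (a :: l).permutations,
      trace ((l'.map fun x => (ρ x : Matrix n n R)).prod) =
        trace (ρ (a * l.prod) : Matrix n n R) := by
    intro l' hl'
    rw [show (l'.map fun x => (ρ x : Matrix n n R)).prod = ρ l'.prod from
      (map_list_prod ((Units.coeHom _).comp ρ) l').symm]
    exact (List.isConj_prod_of_perm_cons hl (List.mem_permutations.mp hl')).trace_map_eq ρ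
  rw [List.map_congr_left hconst, List.map_const', List.sum_replicate, List.length_permutations,
    List.length_cons]

end Representation

theorem stmt2_general {G : Type*} [Group G] (G₁ : Subgroup G) [G₁.Normal]
    (hab : ∀ x ∈ G₁, ∀ y ∈ G₁, x * y = y * x)
    (m k d : ℕ) (h : Fin m → G)
    (hgen : Subgroup.closure (Set.range h) = G₁)
    (g : Fin k → G)
    (hrep : ∀ q : G ⧸ G₁, ∃ j, IsConj ((g j : G) : G ⧸ G₁) q)
    (ρ₁ ρ₂ : G →* GL (Fin d) ℂ)
    (K : Set G) (hK : K = Set.range g ∪ Set.range h ∪ Set.range fun i => (h i)⁻¹)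
    (hspec : ∀ l : List G, (∀ x ∈ l, x ∈ K) →
      (l.permutations.map fun l' =>
        Matrix.trace ((l'.map fun x => ((ρ₁ x : GL (Fin d) ℂ) : Matrix (Fin d) (Fin d) ℂ)).prod)).sum =
      (l.permutations.map fun l' =>
        Matrix.trace ((l'.map fun x => ((ρ₂ x : GL (Fin d) ℂ) : Matrix (Fin d) (Fin d) ℂ)).prod)).sum) :
    ∀ x : G, Matrix.trace ((ρ₁ x : GL (Fin d) ℂ) : Matrix (Fin d) (Fin d) ℂ) =
      Matrix.trace ((ρ₂ x : GL (Fin d) ℂ) : Matrix (Fin d) (Fin d) ℂ) := by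
  intro x
  obtain ⟨j, hj⟩ := hrep x
  obtain ⟨b, hb, hconj⟩ := QuotientGroup.exists_mem_isConj_mul_of_isConj_mk hj
  obtain ⟨l, hlS, rfl⟩ := Subgroup.exists_list_of_mem_closure (hgen ▸ hb)
  have hlG₁ : ∀ z ∈ l, z ∈ G₁ := fun z hz => by
    rw [← hgen]
    rcases hlS z hz with hS | hS
    · exact Subgroup.subset_closure hS
    · exact inv_inv z ▸ Subgroup.inv_mem _ (Subgroup.subset_closure hS)
  have hcomm : l.Pairwise Commute :=
    List.pairwise_of_forall_mem_list fun u hu v hv => hab u (hlG₁ u hu) v (hlG₁ v hv)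
  have hlK : ∀ z ∈ g j :: l, z ∈ K := by
    rw [hK, ← Set.inv_range]
    intro z hz
    rcases List.mem_cons.mp hz with rfl | hz
    · exact Or.inl (Or.inl ⟨j, rfl⟩)
    · exact (hlS z hz).imp_left Or.inr
  have hsum := hspec _ hlK
  rw [sum_permutations_trace_map_prod_cons ρ₁ _ hcomm,
    sum_permutations_trace_map_prod_cons ρ₂ _ hcomm] at hsum
  rw [← hconj.trace_map_eq ρ₁, ← hconj.trace_map_eq ρ₂]
  exact smul_right_injective ℂ (Nat.factorial_ne_zero _) hsum

/-- For a group `G` of affine type (finitely generated abelian normal subgroup `G₁` with finite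
quotient), with `h₁,…,h_m` generating `G₁` and `g₁,…,g_k` representing every conjugacy class of
`G/G₁`: if for every finite sequence of elements from
`K = {g₁,…,g_k, h₁,…,h_m, h₁⁻¹,…,h_m⁻¹}` the traces of images under `ρ₁` and `ρ₂`, summed over
all permutations of the sequence (i.e. summed by signature), agree, then `χ_{ρ₁} = χ_{ρ₂}`. -/
theorem stmt2 {G : Type*} [Group G] (G₁ : Subgroup G) [G₁.Normal]
    (hab : ∀ x ∈ G₁, ∀ y ∈ G₁, x * y = y * x)
    [Finite (G ⧸ G₁)]
    (m k d : ℕ) (h : Fin m → G) (hmem : ∀ i, h i ∈ G₁)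
    (hgen : Subgroup.closure (Set.range h) = G₁)
    (g : Fin k → G)
    (hrep : ∀ q : G ⧸ G₁, ∃ j, IsConj ((g j : G) : G ⧸ G₁) q)
    (ρ₁ ρ₂ : G →* GL (Fin d) ℂ)
    (K : Set G) (hK : K = Set.range g ∪ Set.range h ∪ Set.range fun i => (h i)⁻¹)
    (hspec : ∀ l : List G, (∀ x ∈ l, x ∈ K) →
      (l.permutations.map fun l' =>
        Matrix.trace ((l'.map fun x => ((ρ₁ x : GL (Fin d) ℂ) : Matrix (Fin d) (Fin d) ℂ)).prod)).sum =
      (l.permutations.map fun l' =>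
        Matrix.trace ((l'.map fun x => ((ρ₂ x : GL (Fin d) ℂ) : Matrix (Fin d) (Fin d) ℂ)).prod)).sum) :
    ∀ x : G, Matrix.trace ((ρ₁ x : GL (Fin d) ℂ) : Matrix (Fin d) (Fin d) ℂ) =
      Matrix.trace ((ρ₂ x : GL (Fin d) ℂ) : Matrix (Fin d) (Fin d) ℂ) :=
  stmt2_general G₁ hab m k d h hgen g hrep ρ₁ ρ₂ K hK hspec
end

section
/- In the affine Coxeter group Ãₙ with generators a₁,…,a_{n+1} (indices mod n+1) and relations aᵢ² = 1, (aᵢa_{i+1})³ = 1, and aᵢaⱼ = aⱼaᵢ for |i−j| ≥ 2 (mod n+1), define pⱼ = a_{j+1}a_{j+2}⋯a_{j−1} (the product of all generators in cyclic order starting from a_{j+1}). Then for all 1 ≤ i, j ≤ n+1: aᵢpⱼ = p_{j−1}a_{i−1} if i = j; aᵢpⱼ = p_{j+1}a_{i−1} if i = j+1 (mod n+1); and aᵢpⱼ = pⱼa_{i−1} otherwise. -/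
open CoxeterMatrix

/-- The affine Coxeter matrix of type Ãₙ on the cyclic index set `ZMod (n+1)`:
`aᵢ² = 1`, `(aᵢa_{i+1})³ = 1`, and non-adjacent generators (mod n+1) commute. -/
def affineA (n : ℕ) : CoxeterMatrix (ZMod (n + 1)) where
  M := fun i j => if i = j then 1 else if i = j + 1 ∨ j = i + 1 then 3 else 2
  isSymm := by
    ext i j
    by_cases h : i = j
    · simp [Matrix.transpose, h]
    · simp only [Matrix.transpose, Matrix.of_apply]
      rw [if_neg h, if_neg (Ne.symm h)]
      exact if_congr or_comm rfl rfl
  diagonal := fun i => by simp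
  off_diagonal := fun i j h => by
    simp only [if_neg h]
    split <;> simp

/-- The Coxeter generators `aᵢ` of `Ãₙ`. -/
def aa (n : ℕ) (i : ZMod (n + 1)) : (affineA n).Group := (affineA n).simple i

/-- The cyclic products `pⱼ = a_{j+1} a_{j+2} ⋯ a_{j-1}` (indices mod `n+1`). -/
def pp (n : ℕ) (j : ZMod (n + 1)) : (affineA n).Group :=
  ((List.range n).map fun k => aa n (j + 1 + (k : ℕ))).prod

/-- `gⱼ = pⱼ⁻¹ p_{j+1}`. -/
def gg (n : ℕ) (j : ZMod (n + 1)) : (affineA n).Group := (pp n j)⁻¹ * pp n (j + 1)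

/-- The subgroup `N = ⟨pⱼ⁻¹pᵢ : i, j⟩` of `Ãₙ`. -/
def NN (n : ℕ) : Subgroup (affineA n).Group :=
  Subgroup.closure {x | ∃ i j : ZMod (n + 1), x = (pp n j)⁻¹ * pp n i}

/-- The standard parabolic subgroup `⟨a₁,…,aₙ⟩` of `Ãₙ` (all generators except `a_{n+1} = a₀`). -/
def parab (n : ℕ) : Subgroup (affineA n).Group :=
  Subgroup.closure {x | ∃ i : ZMod (n + 1), i ≠ 0 ∧ x = aa n i}

/-!
Write `pⱼ` as the cyclic word `a_{j+1} a_{j+2} ⋯ a_{j+n}`. For `i = j` and `i = j + 1` the relation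
is a rotation of this word, using `a_{j+n} = a_{j-1}` and `aᵢ² = 1`. Otherwise `aᵢ` sits strictly
inside the word, next to `a_{i-1}`: it commutes past the letters before `a_{i-1}`, the braid relation
turns `aᵢ a_{i-1} aᵢ` into `a_{i-1} aᵢ a_{i-1}`, and the new `a_{i-1}` commutes past the letters after
`aᵢ`, since none of them is a neighbour of it.
-/

namespace CoxeterSystem

variable {B W : Type*} [Group W] {M : CoxeterMatrix B} (cs : CoxeterSystem M W)

theorem simple_commute_of_eq_two {i i' : B} (h : M i i' = 2) :
    Commute (cs.simple i) (cs.simple i') := by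
  have := cs.wordProd_braidWord_eq i i'
  simpa [Commute, SemiconjBy, braidWord, h, M.symmetric i' i, alternatingWord, wordProd]
    using this

theorem simple_braid_of_eq_three {i i' : B} (h : M i i' = 3) :
    cs.simple i * cs.simple i' * cs.simple i = cs.simple i' * cs.simple i * cs.simple i' := by
  have := cs.wordProd_braidWord_eq i i'
  simpa [braidWord, h, M.symmetric i' i, alternatingWord, wordProd, mul_assoc] using this.symm

end CoxeterSystem

lemma ZMod.natCast_ne_zero_of_lt {m k : ℕ} (h0 : m ≠ 0) (hm : m < k) : (m : ZMod k) ≠ 0 := by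
  rw [Ne, ZMod.natCast_eq_zero_iff]
  exact fun hdvd => h0 (Nat.eq_zero_of_dvd_of_lt hdvd hm)

section AffineA

variable {n : ℕ}

lemma aa_eq_simple (i : ZMod (n + 1)) : aa n i = (affineA n).toCoxeterSystem.simple i := by
  rw [toCoxeterSystem_simple]; rfl

lemma aa_mul_self (i : ZMod (n + 1)) : aa n i * aa n i = 1 := by
  rw [aa_eq_simple]; exact CoxeterSystem.simple_mul_simple_self _ i

lemma affineA_M_add_one (hn : n ≠ 0) (c : ZMod (n + 1)) : (affineA n).M c (c + 1) = 3 := by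
  have hc : c ≠ c + 1 := by
    simpa using ZMod.natCast_ne_zero_of_lt (m := 1) one_ne_zero (by omega)
  simp [affineA, hc]

lemma affineA_M_add_natCast (c : ZMod (n + 1)) {m : ℕ} (h2 : 2 ≤ m) (hm : m < n) :
    (affineA n).M c (c + m) = 2 := by
  have h0 : (m : ZMod (n + 1)) ≠ 0 := ZMod.natCast_ne_zero_of_lt (by omega) (by omega)
  have h1 : ((m + 1 : ℕ) : ZMod (n + 1)) ≠ 0 := ZMod.natCast_ne_zero_of_lt (by omega) (by omega)
  have h3 : ((m - 1 : ℕ) : ZMod (n + 1)) ≠ 0 := ZMod.natCast_ne_zero_of_lt (by omega) (by omega)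
  push_cast [Nat.cast_sub (by omega : 1 ≤ m)] at h1 h3
  have : c ≠ c + m := by simpa [eq_comm] using h0
  simp only [affineA, if_neg this]
  rw [if_neg]
  rintro (h | h)
  · exact h1 (by linear_combination -h)
  · exact h3 (by linear_combination h)

lemma aa_braid (hn : n ≠ 0) (c : ZMod (n + 1)) :
    aa n c * aa n (c + 1) * aa n c = aa n (c + 1) * aa n c * aa n (c + 1) := by
  simp only [aa_eq_simple]
  exact CoxeterSystem.simple_braid_of_eq_three _ (affineA_M_add_one hn c)

lemma commute_aa_add_natCast (c : ZMod (n + 1)) {m : ℕ} (h2 : 2 ≤ m) (hm : m < n) :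
    Commute (aa n c) (aa n (c + m)) := by
  simp only [aa_eq_simple]
  exact CoxeterSystem.simple_commute_of_eq_two _ (affineA_M_add_natCast c h2 hm)

def cycProd (n : ℕ) (c : ZMod (n + 1)) (m : ℕ) : (affineA n).Group :=
  ((List.range m).map fun k => aa n (c + (k : ℕ))).prod

lemma pp_eq_cycProd (j : ZMod (n + 1)) : pp n j = cycProd n (j + 1) n := rfl

lemma cycProd_add (c : ZMod (n + 1)) (m m' : ℕ) :
    cycProd n c (m + m') = cycProd n c m * cycProd n (c + m) m' := by
  simp [cycProd, List.range_add, Function.comp_def, add_assoc]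

lemma cycProd_one (c : ZMod (n + 1)) : cycProd n c 1 = aa n c := by
  simp [cycProd]

lemma cycProd_two (c : ZMod (n + 1)) : cycProd n c 2 = aa n c * aa n (c + 1) := by
  simp [cycProd, List.range_succ]

lemma commute_aa_add_cycProd (c : ZMod (n + 1)) {m : ℕ} (hm : m + 2 ≤ n) :
    Commute (aa n (c + (m + 1 : ℕ))) (cycProd n c m) := by
  refine Commute.list_prod_right _ _ fun x hx => ?_
  obtain ⟨k, hk, rfl⟩ := List.mem_map.mp hx
  rw [List.mem_range] at hk
  have hc : c + ((m + 1 : ℕ) : ZMod (n + 1)) = c + k + ((m + 1 - k : ℕ) : ZMod (n + 1)) := by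
    rw [Nat.cast_sub (by omega)]; ring
  rw [hc]
  exact (commute_aa_add_natCast _ (by omega) (by omega)).symm

lemma commute_aa_cycProd_add_two (c : ZMod (n + 1)) {m : ℕ} (hm : m + 2 ≤ n) :
    Commute (aa n c) (cycProd n (c + 2) m) := by
  refine Commute.list_prod_right _ _ fun x hx => ?_
  obtain ⟨k, hk, rfl⟩ := List.mem_map.mp hx
  rw [List.mem_range] at hk
  have hc : c + 2 + (k : ZMod (n + 1)) = c + ((k + 2 : ℕ) : ZMod (n + 1)) := by push_cast; ring
  rw [hc]
  exact commute_aa_add_natCast _ (by omega) (by omega)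

lemma aa_mul_cycProd_of_interior (c : ZMod (n + 1)) {u v : ℕ} (hu : u + 2 ≤ n) (hv : v + 2 ≤ n) :
    aa n (c + (u + 1 : ℕ)) * cycProd n c (u + 2 + v) =
      cycProd n c (u + 2 + v) * aa n (c + u) := by
  have hc : c + ((u + 2 : ℕ) : ZMod (n + 1)) = c + u + 2 := by push_cast; ring
  rw [cycProd_add, cycProd_add, cycProd_two, hc]
  simp only [← mul_assoc]
  rw [(commute_aa_add_cycProd c hu).eq]
  set d := c + (u : ZMod (n + 1))
  have hd : c + ((u + 1 : ℕ) : ZMod (n + 1)) = d + 1 := by push_cast; ring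
  rw [hd]
  calc _ = cycProd n c u * (aa n (d + 1) * aa n d * aa n (d + 1)) * cycProd n (d + 2) v := by
        simp only [mul_assoc]
    _ = cycProd n c u * (aa n d * aa n (d + 1)) * (aa n d * cycProd n (d + 2) v) := by
        rw [← aa_braid (by omega)]; simp only [mul_assoc]
    _ = _ := by
        rw [(commute_aa_cycProd_add_two d hv).eq]; simp only [mul_assoc]

lemma aa_mul_pp_self (j : ZMod (n + 1)) : aa n j * pp n j = pp n (j - 1) * aa n (j - 1) := by
  calc aa n j * pp n j = cycProd n j (1 + n) := by
        rw [cycProd_add, cycProd_one, pp_eq_cycProd, Nat.cast_one]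
    _ = cycProd n j (n + 1) := congrArg (cycProd n j) (Nat.add_comm 1 n)
    _ = pp n (j - 1) * aa n (j - 1) := by
        rw [cycProd_add, cycProd_one, pp_eq_cycProd, sub_add_cancel]
        congr 2
        linear_combination ZMod.natCast_self' n

lemma aa_add_one_mul_pp (j : ZMod (n + 1)) : aa n (j + 1) * pp n j = pp n (j + 1) * aa n j := by
  cases n with
  | zero => simp [pp, Subsingleton.elim (α := ZMod 1) (j + 1) j]
  | succ m =>
    have hj : j + 1 + 1 + (m : ZMod (m + 1 + 1)) = j := by
      linear_combination (norm := (push_cast; ring)) ZMod.natCast_self' (m + 1)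
    have hl : pp (m + 1) j = aa (m + 1) (j + 1) * cycProd (m + 1) (j + 1 + 1) m := by
      rw [pp_eq_cycProd, congrArg (cycProd (m + 1) (j + 1)) (Nat.add_comm m 1), cycProd_add,
        cycProd_one, Nat.cast_one]
    have hr : pp (m + 1) (j + 1) = cycProd (m + 1) (j + 1 + 1) m * aa (m + 1) j := by
      rw [pp_eq_cycProd, cycProd_add, cycProd_one, hj]
    rw [hl, hr, ← mul_assoc, aa_mul_self, one_mul, mul_assoc, aa_mul_self, mul_one]

lemma exists_eq_add_natCast_of_ne {i j : ZMod (n + 1)} (h1 : i ≠ j) (h2 : i ≠ j + 1) :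
    ∃ u v : ℕ, u + 2 + v = n ∧ i = j + 1 + (u + 1 : ℕ) := by
  set t := (i - (j + 1)).val
  have hi : i = j + 1 + t := by rw [ZMod.natCast_zmod_val]; ring
  have ht0 : t ≠ 0 := fun h => h2 (by simp [hi, h])
  have htn : t ≠ n := fun h => h1 (by rw [hi, h]; linear_combination ZMod.natCast_self' n)
  have htlt : t < n + 1 := ZMod.val_lt _
  refine ⟨t - 1, n - 1 - t, by omega, ?_⟩
  rw [hi, Nat.sub_add_cancel (Nat.pos_of_ne_zero ht0)]

lemma aa_mul_pp_of_ne {i j : ZMod (n + 1)} (h1 : i ≠ j) (h2 : i ≠ j + 1) :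
    aa n i * pp n j = pp n j * aa n (i - 1) := by
  obtain ⟨u, v, hn, rfl⟩ := exists_eq_add_natCast_of_ne h1 h2
  have hi : j + 1 + ((u + 1 : ℕ) : ZMod (n + 1)) - 1 = j + 1 + u := by push_cast; ring
  rw [pp_eq_cycProd, hi, ← congrArg (cycProd n (j + 1)) hn]
  exact aa_mul_cycProd_of_interior (j + 1) (by omega) (by omega)

end AffineA

theorem stmt4_general (n : ℕ) (i j : ZMod (n + 1)) :
    (i = j → aa n i * pp n j = pp n (j - 1) * aa n (i - 1)) ∧
    (i = j + 1 → aa n i * pp n j = pp n (j + 1) * aa n (i - 1)) ∧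
    (i ≠ j → i ≠ j + 1 → aa n i * pp n j = pp n j * aa n (i - 1)) := by
  refine ⟨?_, ?_, aa_mul_pp_of_ne⟩
  · rintro rfl
    exact aa_mul_pp_self i
  · rintro rfl
    rw [add_sub_cancel_right]
    exact aa_add_one_mul_pp j

/-- Relations between the generators `aᵢ` and the cyclic products `pⱼ` in `Ãₙ`. -/
theorem stmt4 (n : ℕ) (hn : 2 ≤ n) (i j : ZMod (n + 1)) :
    (i = j → aa n i * pp n j = pp n (j - 1) * aa n (i - 1)) ∧
    (i = j + 1 → aa n i * pp n j = pp n (j + 1) * aa n (i - 1)) ∧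
    (i ≠ j → i ≠ j + 1 → aa n i * pp n j = pp n j * aa n (i - 1)) :=
  stmt4_general n i j
end

section
/- In the finite Coxeter group Aₙ (symmetric group S_{n+1} with Coxeter generators a₁,…,aₙ), every element is conjugate to an element in echelon form δ₁δ₂⋯δₙ, where each δᵢ ∈ {1, aᵢ}. -/
/-!
Write `w` as a word in the generators `s_i` and induct on the largest index `k` that occurs.
A factor `s_k u s_k`, with `u` a word in smaller generators, can be rewritten by commutations
and the braid relation `s_k s_{k-1} s_k = s_{k-1} s_k s_{k-1}` into a word in `s_0, …, s_k` of
smaller weight `∑ (i + 1)`, so `s_k` may be assumed to occur at most once. If it occurs once,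
`w = x s_k y` is conjugate to `(y x) s_k`; by induction `y x` is conjugated into echelon form
by an element commuting with `s_k`, which conjugates `(y x) s_k` into echelon form as well.
-/

namespace CoxeterMatrix

theorem A_apply_of_add_two_le {n : ℕ} {i j : Fin n} (h : (i : ℕ) + 2 ≤ j) :
    CoxeterMatrix.A n i j = 2 := by
  simp only [CoxeterMatrix.A, Matrix.of_apply, Fin.ext_iff]
  split_ifs <;> omega

theorem A_apply_of_add_one_eq {n : ℕ} {i j : Fin n} (h : (i : ℕ) + 1 = j) :
    CoxeterMatrix.A n i j = 3 := by
  simp only [CoxeterMatrix.A, Matrix.of_apply, Fin.ext_iff]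
  split_ifs <;> omega

end CoxeterMatrix

namespace CoxeterSystem

variable {B W : Type*} [Group W] {M : CoxeterMatrix B} (cs : CoxeterSystem M W)

theorem commute_wordProd {g : W} {l : List B} (h : ∀ i ∈ l, Commute g (cs.simple i)) :
    Commute g (cs.wordProd l) :=
  Commute.list_prod_right _ _ (by simpa using h)

theorem commute_simple_of_eq_two {i j : B} (h : M i j = 2) :
    Commute (cs.simple i) (cs.simple j) := by
  have := cs.wordProd_braidWord_eq i j
  rw [braidWord, braidWord, M.symmetric j i, h] at this
  simpa [alternatingWord, wordProd, commute_iff_eq] using this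

theorem simple_mul_simple_mul_simple_of_eq_three {i j : B} (h : M i j = 3) :
    cs.simple i * cs.simple j * cs.simple i = cs.simple j * cs.simple i * cs.simple j := by
  have := cs.wordProd_braidWord_eq i j
  rw [braidWord, braidWord, M.symmetric j i, h] at this
  simpa [alternatingWord, wordProd, mul_assoc] using this.symm

end CoxeterSystem

namespace List

theorem prod_map_ite_one {α M : Type*} [Monoid M] (p : α → Prop) [DecidablePred p]
    (f : α → M) (l : List α) :
    (l.map fun a => if p a then f a else 1).prod = ((l.filter p).map f).prod := by
  induction l with
  | nil => rfl
  | cons a l ih => by_cases h : p a <;> simp [h, ih]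

theorem prod_ofFn_ite_mem {M : Type*} [Monoid M] {n : ℕ} (f : Fin n → M)
    {l : List (Fin n)} (hl : l.Pairwise (· < ·)) :
    (ofFn fun i => if i ∈ l then f i else 1).prod = (l.map f).prod := by
  have hfilter : (finRange n).filter (· ∈ l) = l := by
    refine Perm.eq_of_pairwise' ((pairwise_lt_finRange n).filter _) hl ?_
    rw [perm_ext_iff_of_nodup ((nodup_finRange n).filter _) hl.nodup]
    simp
  rw [ofFn_eq_map, prod_map_ite_one, hfilter]

end List

namespace CoxeterSystem

open CoxeterMatrix List

variable {n : ℕ}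

def wordWeight (l : List (Fin n)) : ℕ := (l.map fun i => i.val + 1).sum

@[simp] theorem wordWeight_nil : wordWeight ([] : List (Fin n)) = 0 := rfl

@[simp] theorem wordWeight_cons (i : Fin n) (l : List (Fin n)) :
    wordWeight (i :: l) = i + 1 + wordWeight l := rfl

@[simp] theorem wordWeight_append (l l' : List (Fin n)) :
    wordWeight (l ++ l') = wordWeight l + wordWeight l' := by
  simp [wordWeight]

variable {W : Type*} [Group W] (cs : CoxeterSystem (CoxeterMatrix.A n) W)

theorem commute_simple_wordProd_of_forall_add_two_le {j : Fin n} {u : List (Fin n)}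
    (hu : ∀ i ∈ u, (i : ℕ) + 2 ≤ j) : Commute (cs.simple j) (cs.wordProd u) :=
  cs.commute_wordProd fun i hi =>
    (cs.commute_simple_of_eq_two (A_apply_of_add_two_le (hu i hi))).symm

theorem simple_mul_wordProd_mul_simple_of_forall_add_two_le {j : Fin n} {u : List (Fin n)}
    (hu : ∀ i ∈ u, (i : ℕ) + 2 ≤ j) :
    cs.simple j * cs.wordProd u * cs.simple j = cs.wordProd u := by
  rw [(cs.commute_simple_wordProd_of_forall_add_two_le hu).eq, mul_assoc,
    cs.simple_mul_simple_self, mul_one]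

theorem simple_mul_wordProd_mul_simple_of_add_one_eq {p j : Fin n} (hpj : (p : ℕ) + 1 = j)
    {x y : List (Fin n)} (hx : ∀ i ∈ x, i < p) (hy : ∀ i ∈ y, i < p) :
    cs.simple j * cs.wordProd (x ++ p :: y) * cs.simple j =
      cs.wordProd (x ++ [p, j, p] ++ y) := by
  have hxj := (cs.commute_simple_wordProd_of_forall_add_two_le (j := j) fun i hi => by
    have := hx i hi; omega).eq
  have hyj := (cs.commute_simple_wordProd_of_forall_add_two_le (j := j) fun i hi => by
    have := hy i hi; omega).eq
  calc cs.simple j * cs.wordProd (x ++ p :: y) * cs.simple j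
      = cs.simple j * cs.wordProd x * cs.simple p * (cs.wordProd y * cs.simple j) := by
        simp only [wordProd_append, wordProd_cons, mul_assoc]
    _ = cs.wordProd x * (cs.simple j * cs.simple p * cs.simple j) * cs.wordProd y := by
        rw [hxj, ← hyj]; group
    _ = cs.wordProd x * (cs.simple p * cs.simple j * cs.simple p) * cs.wordProd y := by
        rw [cs.simple_mul_simple_mul_simple_of_eq_three (A_apply_of_add_one_eq hpj)]
    _ = cs.wordProd (x ++ [p, j, p] ++ y) := by
        simp only [wordProd_append, wordProd_cons, wordProd_nil, mul_one, mul_assoc]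

theorem exists_wordProd_eq_simple_mul_wordProd_mul_simple (j : Fin n) (u : List (Fin n))
    (hu : ∀ i ∈ u, i < j) :
    ∃ v : List (Fin n), cs.wordProd v = cs.simple j * cs.wordProd u * cs.simple j ∧
      (∀ i ∈ v, i ≤ j) ∧ wordWeight v < wordWeight u + 2 * (j + 1) := by
  by_cases hfar : ∀ i ∈ u, (i : ℕ) + 2 ≤ j
  · exact ⟨u, (cs.simple_mul_wordProd_mul_simple_of_forall_add_two_le hfar).symm,
      fun i hi => (hu i hi).le, by omega⟩
  push Not at hfar
  obtain ⟨p, hpu, hjp⟩ := hfar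
  have hpj : (p : ℕ) + 1 = j := by have := hu p hpu; omega
  have hlt : ∀ l : List (Fin n), (∀ i ∈ l, i < j) → p ∉ l → ∀ i ∈ l, i < p :=
    fun l hl hpl i hi => by have := hl i hi; have := ne_of_mem_of_not_mem hi hpl; omega
  obtain ⟨x, y, hpx, rfl, -⟩ := exists_erase_eq hpu
  obtain ⟨hx, -, hy⟩ : (∀ i ∈ x, i < j) ∧ p < j ∧ ∀ i ∈ y, i < j := by
    simpa only [forall_mem_append, forall_mem_cons] using hu
  by_cases hpy : p ∈ y
  · obtain ⟨u', y', hpu', rfl, -⟩ := exists_erase_eq hpy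
    obtain ⟨hu', -, hy'⟩ : (∀ i ∈ u', i < j) ∧ p < j ∧ ∀ i ∈ y', i < j := by
      simpa only [forall_mem_append, forall_mem_cons] using hy
    obtain ⟨w, hw, hwp, hwt⟩ :=
      exists_wordProd_eq_simple_mul_wordProd_mul_simple p u' (hlt u' hu' hpu')
    refine ⟨j :: x ++ w ++ y' ++ [j], ?_, ?_, ?_⟩
    · simp only [wordProd_append, wordProd_cons, wordProd_nil, hw, mul_one, mul_assoc]
    · simp only [forall_mem_append, forall_mem_cons]
      exact ⟨⟨⟨⟨le_rfl, fun i hi => (hx i hi).le⟩,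
        fun i hi => (hwp i hi).trans (by omega)⟩, fun i hi => (hy' i hi).le⟩,
        le_rfl, forall_mem_nil _⟩
    · simp only [wordWeight_append, wordWeight_cons, wordWeight_nil] at hwt ⊢
      omega
  · refine ⟨x ++ [p, j, p] ++ y, (cs.simple_mul_wordProd_mul_simple_of_add_one_eq hpj
      (hlt x hx hpx) (hlt y hy hpy)).symm, ?_, ?_⟩
    · simp only [forall_mem_append, forall_mem_cons]
      exact ⟨⟨fun i hi => (hx i hi).le, by omega, le_rfl, by omega, forall_mem_nil _⟩,
        fun i hi => (hy i hi).le⟩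
    · simp only [wordWeight_append, wordWeight_cons, wordWeight_nil]
      omega
termination_by j

theorem exists_wordProd_eq_of_forall_le (j : Fin n) (u : List (Fin n)) (hu : ∀ i ∈ u, i ≤ j) :
    (∃ v, cs.wordProd v = cs.wordProd u ∧ ∀ i ∈ v, i < j) ∨
      ∃ x y, cs.wordProd x * cs.simple j * cs.wordProd y = cs.wordProd u ∧
        (∀ i ∈ x, i < j) ∧ ∀ i ∈ y, i < j := by
  have hlt : ∀ l : List (Fin n), (∀ i ∈ l, i ≤ j) → j ∉ l → ∀ i ∈ l, i < j :=
    fun l hl hjl i hi => (hl i hi).lt_of_ne (ne_of_mem_of_not_mem hi hjl)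
  by_cases hju : j ∈ u
  swap
  · exact .inl ⟨u, rfl, hlt u hu hju⟩
  obtain ⟨x, y, hjx, rfl, -⟩ := exists_erase_eq hju
  obtain ⟨hx, -, hy⟩ : (∀ i ∈ x, i ≤ j) ∧ j ≤ j ∧ ∀ i ∈ y, i ≤ j := by
    simpa only [forall_mem_append, forall_mem_cons] using hu
  by_cases hjy : j ∈ y
  swap
  · exact .inr ⟨x, y, by simp only [wordProd_append, wordProd_cons, mul_assoc],
      hlt x hx hjx, hlt y hy hjy⟩
  obtain ⟨u', y', hju', rfl, -⟩ := exists_erase_eq hjy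
  obtain ⟨hu', -, hy'⟩ : (∀ i ∈ u', i ≤ j) ∧ j ≤ j ∧ ∀ i ∈ y', i ≤ j := by
    simpa only [forall_mem_append, forall_mem_cons] using hy
  obtain ⟨v, hv, hvj, hvw⟩ :=
    cs.exists_wordProd_eq_simple_mul_wordProd_mul_simple j u' (hlt u' hu' hju')
  have hlighter : wordWeight (x ++ v ++ y') < wordWeight (x ++ j :: (u' ++ j :: y')) := by
    simp only [wordWeight_append, wordWeight_cons] at hvw ⊢
    omega
  have hprod : cs.wordProd (x ++ v ++ y') = cs.wordProd (x ++ j :: (u' ++ j :: y')) := by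
    simp only [wordProd_append, wordProd_cons, hv, mul_assoc]
  rw [← hprod]
  refine exists_wordProd_eq_of_forall_le j (x ++ v ++ y') ?_
  simp only [forall_mem_append]
  exact ⟨⟨hx, hvj⟩, hy'⟩
termination_by wordWeight u
decreasing_by subst_vars; simpa using hlighter

/-- A strictly increasing word `l` encodes the echelon element `δ₀ ⋯ δ_{n-1}` with `δ_i = s_i`
exactly for `i ∈ l`. -/
def IsConjToEchelon (j : ℕ) (g : W) : Prop :=
  ∃ (l : List (Fin n)) (c : W), l.Pairwise (· < ·) ∧ (∀ i ∈ l, (i : ℕ) < j) ∧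
    (∀ i : Fin n, j ≤ i → Commute c (cs.simple i)) ∧ c * g * c⁻¹ = cs.wordProd l

variable {cs} in
theorem IsConjToEchelon.mono {j j' : ℕ} {g : W} (h : cs.IsConjToEchelon j g) (hj : j ≤ j') :
    cs.IsConjToEchelon j' g := by
  obtain ⟨l, c, hl, hlj, hc, hcg⟩ := h
  exact ⟨l, c, hl, fun i hi => (hlj i hi).trans_le hj, fun i hi => hc i (hj.trans hi), hcg⟩

variable {cs} in
theorem IsConjToEchelon.mul_simple_mul {k : Fin n} {x y : List (Fin n)} (hy : ∀ i ∈ y, i < k)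
    (h : cs.IsConjToEchelon k (cs.wordProd (y ++ x))) :
    cs.IsConjToEchelon (k + 1) (cs.wordProd x * cs.simple k * cs.wordProd y) := by
  obtain ⟨l, c, hl, hlk, hc, hcyx⟩ := h
  refine ⟨l ++ [k], c * cs.wordProd y, ?_, ?_, fun i hi => ?_, ?_⟩
  · exact pairwise_append.2 ⟨hl, pairwise_singleton _ _, fun a ha b hb => by
      rw [mem_singleton.1 hb]; exact hlk a ha⟩
  · simp only [forall_mem_append, forall_mem_cons]
    exact ⟨fun i hi => (hlk i hi).trans (Nat.lt_succ_self k), Nat.lt_succ_self k,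
      forall_mem_nil _⟩
  · refine (hc i (by omega)).mul_left
      (cs.commute_simple_wordProd_of_forall_add_two_le fun t ht => ?_).symm
    have := hy t ht; omega
  · calc c * cs.wordProd y * (cs.wordProd x * cs.simple k * cs.wordProd y) *
          (c * cs.wordProd y)⁻¹
        = c * cs.wordProd (y ++ x) * c⁻¹ * (c * cs.simple k * c⁻¹) := by
          rw [wordProd_append]; group
      _ = cs.wordProd (l ++ [k]) := by
          rw [hcyx, (hc k le_rfl).mul_inv_cancel, wordProd_append, wordProd_singleton]

theorem isConjToEchelon_wordProd (j : ℕ) (u : List (Fin n)) (hu : ∀ i ∈ u, (i : ℕ) < j) :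
    cs.IsConjToEchelon j (cs.wordProd u) := by
  induction j generalizing u with
  | zero =>
    obtain rfl : u = [] := eq_nil_iff_forall_not_mem.2 fun i hi => by have := hu i hi; omega
    exact ⟨[], 1, Pairwise.nil, forall_mem_nil _, fun i _ => Commute.one_left _, by simp⟩
  | succ k ih =>
    by_cases hk : k < n
    swap
    · exact (ih u fun i _ => by omega).mono k.le_succ
    rcases cs.exists_wordProd_eq_of_forall_le ⟨k, hk⟩ u
      (fun i hi => Nat.lt_succ_iff.1 (hu i hi)) with ⟨v, hvu, hv⟩ | ⟨x, y, hxy, hx, hy⟩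
    · exact hvu ▸ (ih v hv).mono k.le_succ
    · exact hxy ▸ (ih (y ++ x) (forall_mem_append.2 ⟨hy, hx⟩)).mul_simple_mul hy

end CoxeterSystem

/-- In the finite Coxeter group `Aₙ` (the symmetric group `S_{n+1}` with Coxeter generators
`a₁,…,aₙ`), every element is conjugate to an element in echelon form `δ₁δ₂⋯δₙ` with each
`δᵢ ∈ {1, aᵢ}`. -/
theorem stmt17 (n : ℕ) (w : (CoxeterMatrix.Aₙ n).Group) :
    ∃ δ : Fin n → (CoxeterMatrix.Aₙ n).Group,
      (∀ i, δ i = 1 ∨ δ i = (CoxeterMatrix.Aₙ n).simple i) ∧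
      IsConj ((List.ofFn δ).prod) w := by
  set cs := (CoxeterMatrix.Aₙ n).toCoxeterSystem
  obtain ⟨u, rfl⟩ := cs.wordProd_surjective w
  obtain ⟨l, c, hl, -, -, hconj⟩ := cs.isConjToEchelon_wordProd n u fun i _ => i.isLt
  refine ⟨fun i => if i ∈ l then cs.simple i else 1, fun i => ?_, ?_⟩
  · by_cases hi : i ∈ l <;> simp [hi, cs]
  · rw [List.prod_ofFn_ite_mem cs.simple hl, isConj_comm, isConj_iff]
    exact ⟨c, hconj⟩
end
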